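/- arXiv:0911.0508 — 6 statements merged into one kernel-verified Lean document; each statement's English description precedes it below -/
import Mathlib

section
/- Let G be a simple graph with vertices v_1, …, v_m. If there exists a numbering of G whose Mod-Sum-Cut value is k, then the star instance S(G) of the Common Prefix Problem has a solution of benefit at least k − m. -/
/-- Length of the longest common prefix of two lists. -/
def lcp {α : Type*} [DecidableEq α] : List α → List α → ℕ
  | a :: p, b :: q => if a = b then lcp p q + 1 else 0
  | _, _ => 0

/-- `p` is a permutation of the finite set `s`: a duplicate-free list whose
set of elements is exactly `s`. -/
def IsPermOf {α : Type*} [DecidableEq α] (p : List α) (s : Finset α) : Prop :=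
  p.Nodup ∧ p.toFinset = s

/-- Mod-Sum-Cut value of a numbering `σ` (0-based) of the graph `G`:
`Σ_i q_i` where `q_i` is the number of vertices adjacent to every vertex
numbered greater than `i`. -/
def modSumCut {m : ℕ} (G : SimpleGraph (Fin m)) [DecidableRel G.Adj]
    (σ : Fin m ≃ Fin m) : ℕ :=
  ∑ i : Fin m, (Finset.univ.filter fun v => ∀ u, i < σ u → G.Adj v u).card

/-- Benefit of a solution of the star instance `S(G)`: the sum over the edges
`u_r u_i` of the length of the longest common prefix of the permutations. -/
def starBenefit {m : ℕ} (pr : List (Fin m)) (pl : Fin m → List (Fin m)) : ℕ :=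
  ∑ i : Fin m, lcp pr (pl i)

theorem lcp_filter {α : Type*} [DecidableEq α] (p : α → Bool) :
    ∀ l : List α, lcp l (l.filter p) = (l.takeWhile p).length := by
  intro l
  induction l with
  | nil => rfl
  | cons a t ih =>
    by_cases h : p a
    · simp [List.filter_cons, List.takeWhile_cons, h, lcp, ih]
    · simp only [List.filter_cons, h, List.takeWhile_cons]
      simp only [Bool.false_eq_true, if_false, h]
      cases hf : t.filter p with
      | nil => simp [lcp]
      | cons b s =>
        have hb : p b := List.of_mem_filter (hf ▸ (List.mem_cons_self : b ∈ b :: s))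
        have : a ≠ b := fun he => by rw [he] at h; exact h hb
        simp [lcp, this]

theorem takeWhile_len_ge {α : Type*} (p : α → Bool) :
    ∀ (l : List α) (t : ℕ), (∀ x ∈ l.take t, p x) → min t l.length ≤ (l.takeWhile p).length := by
  intro l
  induction l with
  | nil => simp
  | cons a s ih =>
    intro t ht
    cases t with
    | zero => simp
    | succ t =>
      have ha : p a := ht a (by simp)
      simp only [List.takeWhile_cons, ha, if_true, List.length_cons]
      have := ih t (fun x hx => ht x (by simp [List.take_succ_cons]; exact Or.inr hx))
      omega

/-- If a numbering of `G` has Mod-Sum-Cut value `k`, then the star instance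
`S(G)` of the Common Prefix Problem has a solution of benefit at least `k - m`. -/
theorem stmt0 {m k : ℕ} (G : SimpleGraph (Fin m)) [DecidableRel G.Adj]
    (σ : Fin m ≃ Fin m) (hσ : modSumCut G σ = k) :
    ∃ (pr : List (Fin m)) (pl : Fin m → List (Fin m)),
      IsPermOf pr Finset.univ ∧ (∀ i, IsPermOf (pl i) (G.neighborFinset i)) ∧
      k - m ≤ starBenefit pr pl := by
  classical
  set pr : List (Fin m) := (List.finRange m).map (fun j => σ.symm j.rev) with hpr
  have hlen : pr.length = m := by simp [hpr]
  have hnodup : pr.Nodup := by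
    refine (List.nodup_finRange m).map ?_
    intro a b hab
    have := σ.symm.injective hab
    exact Fin.rev_injective this
  have htofin : pr.toFinset = Finset.univ := by
    apply Finset.eq_univ_of_card
    rw [List.toFinset_card_of_nodup hnodup, hlen, Fintype.card_fin]
  set pl : Fin m → List (Fin m) := fun v => pr.filter (fun u => decide (G.Adj v u)) with hpl
  refine ⟨pr, pl, ⟨hnodup, htofin⟩, fun v => ⟨hnodup.filter _, ?_⟩, ?_⟩
  · rw [hpl]
    simp only [List.toFinset_filter, htofin]
    ext u
    simp [SimpleGraph.mem_neighborFinset]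
  -- benefit equals sum of takeWhile lengths
  have hben : starBenefit pr pl
      = ∑ v : Fin m, (pr.takeWhile (fun u => decide (G.Adj v u))).length := by
    unfold starBenefit
    exact Finset.sum_congr rfl fun v _ => lcp_filter _ pr
  -- per-vertex bound
  have hkey : ∀ v : Fin m,
      (Finset.univ.filter fun i : Fin m => ∀ u, i < σ u → G.Adj v u).card
        ≤ (pr.takeWhile (fun u => decide (G.Adj v u))).length + 1 := by
    intro v
    set S := Finset.univ.filter fun i : Fin m => ∀ u, i < σ u → G.Adj v u with hS
    rcases S.eq_empty_or_nonempty with he | hne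
    · simp [he]
    · set i₀ := S.min' hne with hi0
      have hmem := S.min'_mem hne
      have hA : ∀ u, i₀ < σ u → G.Adj v u := (Finset.mem_filter.mp hmem).2
      have hsub : S ⊆ Finset.Ici i₀ := fun i hi => Finset.mem_Ici.mpr (S.min'_le i hi)
      have hcard : S.card ≤ m - (i₀ : ℕ) := by
        calc S.card ≤ (Finset.Ici i₀).card := Finset.card_le_card hsub
        _ = m - (i₀ : ℕ) := Fin.card_Ici i₀
      have htake : ∀ x ∈ pr.take (m - 1 - (i₀ : ℕ)), decide (G.Adj v x) = true := by
        intro x hx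
        rw [List.mem_take_iff_getElem] at hx
        obtain ⟨i, hi, hxeq⟩ := hx
        have hi' : i < (List.finRange m).length := by simp [hpr, List.length_map] at hi ⊢; omega
        have him : i < m := by simpa using hi'
        have hx2 : x = σ.symm (Fin.rev ⟨i, him⟩) := by
          rw [← hxeq]
          simp [hpr, List.getElem_map, List.getElem_finRange]
        have hσx : (σ x : ℕ) = m - 1 - i := by
          rw [hx2]; simp [Fin.rev]; omega
        have hit : i < m - 1 - (i₀:ℕ) := lt_of_lt_of_le hi (by simp)
        have hi0m : (i₀ : ℕ) < m := i₀.isLt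
        refine decide_eq_true (hA x ?_)
        rw [Fin.lt_iff_val_lt_val, hσx]
        omega
      have hTW := takeWhile_len_ge (fun u => decide (G.Adj v u)) pr (m - 1 - (i₀:ℕ)) htake
      rw [hlen] at hTW
      have hi0m : (i₀ : ℕ) < m := i₀.isLt
      omega
  -- double counting
  have hcount : modSumCut G σ
      = ∑ v : Fin m, (Finset.univ.filter fun i : Fin m => ∀ u, i < σ u → G.Adj v u).card := by
    unfold modSumCut
    simp_rw [Finset.card_filter]
    exact Finset.sum_comm
  rw [hσ] at hcount
  have : k ≤ starBenefit pr pl + m := by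
    rw [hcount, hben]
    calc ∑ v : Fin m, (Finset.univ.filter fun i : Fin m => ∀ u, i < σ u → G.Adj v u).card
        ≤ ∑ v : Fin m, ((pr.takeWhile (fun u => decide (G.Adj v u))).length + 1) :=
          Finset.sum_le_sum fun v _ => hkey v
      _ = (∑ v : Fin m, (pr.takeWhile (fun u => decide (G.Adj v u))).length) + m := by
          rw [Finset.sum_add_distrib]; simp
  omega
end

section
/- Let G be a simple graph with vertices v_1, …, v_m. If the star instance S(G) of the Common Prefix Problem has a solution of benefit k, then there exists a numbering of G whose Mod-Sum-Cut value is at least k + m; such a numbering is obtained by numbering the vertices in the reverse of the order in which they appear in the permutation assigned to the root u_r. -/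
theorem lcp_le_right {α : Type*} [DecidableEq α] : ∀ p q : List α, lcp p q ≤ q.length
  | a :: p, b :: q => by
    by_cases h : a = b
    · simp only [lcp, if_pos h, List.length_cons]
      exact Nat.succ_le_succ (lcp_le_right p q)
    · simp [lcp, h]
  | [], q => by cases q <;> simp [lcp]
  | a :: p, [] => by simp [lcp]

theorem lcp_take {α : Type*} [DecidableEq α] :
    ∀ p q : List α, p.take (lcp p q) = q.take (lcp p q)
  | a :: p, b :: q => by
    by_cases h : a = b
    · simp [lcp, h, lcp_take p q]
    · simp [lcp, h]
  | [], q => by cases q <;> simp [lcp]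
  | a :: p, [] => by simp [lcp]

theorem stmt1' {m k : ℕ} (G : SimpleGraph (Fin m)) [DecidableRel G.Adj]
    (pr : List (Fin m)) (pl : Fin m → List (Fin m))
    (hpr : pr.Nodup ∧ pr.toFinset = Finset.univ)
    (hpl : ∀ i, (pl i).Nodup ∧ (pl i).toFinset = G.neighborFinset i)
    (hb : (∑ i : Fin m, lcp pr (pl i)) = k) :
    ∃ σ : Fin m ≃ Fin m,
      (∀ v : Fin m, (σ v : ℕ) = m - 1 - pr.idxOf v) ∧
      k + m ≤ ∑ i : Fin m, (Finset.univ.filter fun v => ∀ u, i < σ u → G.Adj v u).card := by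
  obtain ⟨hnd, htf⟩ := hpr
  have hlen : pr.length = m := by
    have h := List.toFinset_card_of_nodup hnd
    rw [htf] at h
    simpa using h.symm
  have hmem : ∀ v : Fin m, v ∈ pr := fun v => by
    rw [← List.mem_toFinset, htf]; exact Finset.mem_univ v
  have hidx : ∀ v : Fin m, pr.idxOf v < m := fun v => by
    have h := List.idxOf_lt_length_iff.2 (hmem v); omega
  set f : Fin m → Fin m := fun v =>
    ⟨m - 1 - pr.idxOf v, by have := hidx v; have := v.isLt; omega⟩ with hf
  have hinj : Function.Injective f := by
    intro v w hvw
    have h1 := hidx v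
    have h2 := hidx w
    have : pr.idxOf v = pr.idxOf w := by
      have := congrArg Fin.val hvw
      simp only [hf] at this
      omega
    exact (List.idxOf_inj (hmem v)).1 this
  refine ⟨Equiv.ofBijective f (Finite.injective_iff_bijective.mp hinj), fun v => rfl, ?_⟩
  have hσ : ∀ u : Fin m,
      ((Equiv.ofBijective f (Finite.injective_iff_bijective.mp hinj)) u : ℕ)
        = m - 1 - pr.idxOf u := fun u => rfl
  -- per-vertex key bound
  have key : ∀ v : Fin m, lcp pr (pl v) + 1 ≤
      (Finset.univ.filter fun i : Fin m =>
        ∀ u, i < Equiv.ofBijective f (Finite.injective_iff_bijective.mp hinj) u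
          → G.Adj v u).card := by
    intro v
    set L := lcp pr (pl v) with hL
    have hm1 : 0 < m := v.pos
    have hLm : L < m := by
      have h1 := lcp_le_right pr (pl v)
      have h2 : (pl v).length = (G.neighborFinset v).card := by
        rw [← (hpl v).2]; exact (List.toFinset_card_of_nodup (hpl v).1).symm
      have h3 : G.degree v < m := by
        simpa using G.degree_lt_card_verts v
      rw [SimpleGraph.degree] at h3
      omega
    have hadj : ∀ u : Fin m, pr.idxOf u < L → G.Adj v u := by
      intro u hu
      have hul : pr.idxOf u < pr.length := by rw [hlen]; exact hidx u
      have hget : pr[pr.idxOf u] = u := List.getElem_idxOf hul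
      have hmemtake : u ∈ pr.take L := by
        have : (pr.take L)[pr.idxOf u]'(by simp [hlen]; omega) = pr[pr.idxOf u] :=
          List.getElem_take
        rw [hget] at this
        exact this ▸ List.getElem_mem _
      rw [lcp_take pr (pl v)] at hmemtake
      have : u ∈ pl v := List.take_subset _ _ hmemtake
      rw [← SimpleGraph.mem_neighborFinset, ← (hpl v).2]
      exact List.mem_toFinset.2 this
    have := Finset.card_le_card_of_injOn
      (f := fun j : ℕ => (⟨m - 1 - j, by omega⟩ : Fin m))
      (s := Finset.range (L + 1))
      (t := Finset.univ.filter fun i : Fin m =>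
        ∀ u, i < Equiv.ofBijective f (Finite.injective_iff_bijective.mp hinj) u
          → G.Adj v u)
      (by
        intro j hj
        simp only [Finset.mem_coe, Finset.mem_range] at hj
        simp only [Finset.mem_coe, Finset.mem_filter, Finset.mem_univ, true_and]
        intro u hu
        have hu' : (m - 1 - j : ℕ) < m - 1 - pr.idxOf u := by
          have := hσ u
          exact this ▸ hu
        have h2 := hidx u
        exact hadj u (by omega))
      (by
        intro j1 h1 j2 h2 hj
        simp only [Finset.mem_coe, Finset.mem_range] at h1 h2
        have := congrArg Fin.val hj
        simp only at this
        omega)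
    simpa using this
  -- assemble
  have hswap : (∑ i : Fin m, (Finset.univ.filter fun v : Fin m =>
      ∀ u, i < Equiv.ofBijective f (Finite.injective_iff_bijective.mp hinj) u
        → G.Adj v u).card)
      = ∑ v : Fin m, (Finset.univ.filter fun i : Fin m =>
      ∀ u, i < Equiv.ofBijective f (Finite.injective_iff_bijective.mp hinj) u
        → G.Adj v u).card := by
    simp only [Finset.card_filter]
    exact Finset.sum_comm
  rw [hswap]
  calc k + m = ∑ v : Fin m, (lcp pr (pl v) + 1) := by
        rw [Finset.sum_add_distrib, hb]
        simp [Finset.card_univ]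
    _ ≤ _ := Finset.sum_le_sum fun v _ => key v

/-- If the star instance `S(G)` has a solution of benefit `k`, then there is a
numbering of `G` of Mod-Sum-Cut value at least `k + m`; namely the numbering
obtained by numbering the vertices in the reverse of the order in which they
appear in the permutation `pr` assigned to the root. -/
theorem stmt1 {m k : ℕ} (G : SimpleGraph (Fin m)) [DecidableRel G.Adj]
    (pr : List (Fin m)) (pl : Fin m → List (Fin m))
    (hpr : IsPermOf pr Finset.univ)
    (hpl : ∀ i, IsPermOf (pl i) (G.neighborFinset i))
    (hb : starBenefit pr pl = k) :
    ∃ σ : Fin m ≃ Fin m,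
      (∀ v : Fin m, (σ v : ℕ) = m - 1 - pr.idxOf v) ∧
      k + m ≤ modSumCut G σ := by
  exact stmt1' G pr pl hpr hpl hb
end

section
/- Let G be a simple graph with vertices v_1, …, v_m. Then the maximum, over all numberings of G, of the Mod-Sum-Cut value equals m plus the maximum, over all solutions of the star instance S(G) of the Common Prefix Problem, of the benefit. -/
lemma card_filter_le {m k : ℕ} (h : k < m) :
    (Finset.univ.filter fun i : Fin m => (i:ℕ) ≤ k).card = k + 1 := by
  rw [Finset.card_filter, Fin.sum_univ_eq_sum_range (fun i => if i ≤ k then (1:ℕ) else 0),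
    ← Finset.card_filter]
  have : (Finset.range m).filter (fun i => i ≤ k) = Finset.range (k+1) := by
    ext x; simp; omega
  rw [this, Finset.card_range]

lemma lcp_le_takeWhile {α : Type*} [DecidableEq α] {P : α → Bool} :
    ∀ (p q : List α), (∀ b ∈ q, P b) → lcp p q ≤ (p.takeWhile P).length
  | [], q, _ => by cases q <;> simp [lcp]
  | a :: p, [], _ => by simp [lcp]
  | a :: p, b :: q, h => by
      by_cases hab : a = b
      · subst hab
        have hPa : P a := h a (by simp)
        simp only [lcp, if_pos rfl, List.takeWhile_cons, hPa, List.length_cons]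
        exact Nat.succ_le_succ (lcp_le_takeWhile p q fun x hx => h x (by simp [hx]))
      · simp [lcp, hab]

lemma le_lcp_append {α : Type*} [DecidableEq α] :
    ∀ (t p r : List α), t <+: p → t.length ≤ lcp p (t ++ r)
  | [], _, _, _ => by simp
  | a :: t, p, r, h => by
      obtain ⟨s, rfl⟩ := h
      simp only [List.cons_append, lcp, if_pos rfl, List.length_cons]
      exact Nat.succ_le_succ (le_lcp_append t (t ++ s) r ⟨s, rfl⟩)

lemma forall_take_iff {α : Type*} {P : α → Bool} :
    ∀ (l : List α) (t : ℕ), t ≤ l.length →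
      ((∀ u ∈ l.take t, P u) ↔ t ≤ (l.takeWhile P).length)
  | l, 0, _ => by simp
  | [], t+1, ht => by simp at ht
  | a :: l, t+1, ht => by
      simp only [List.length_cons, Nat.add_le_add_iff_right] at ht
      by_cases hP : P a
      · simp only [List.take_succ_cons, List.mem_cons, List.takeWhile_cons, hP,
          if_true, List.length_cons, Nat.add_le_add_iff_right, ← forall_take_iff l t ht]
        constructor
        · intro h u hu; exact h u (Or.inr hu)
        · rintro h u (rfl | hu); · exact hP
          · exact h u hu
      · have hPa : P a = false := by simpa using hP
        simp only [List.take_succ_cons, List.takeWhile_cons, hPa, Bool.false_eq_true,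
          if_false, List.length_nil]
        constructor
        · intro h; exact absurd (h a (by simp)) (by simp [hPa])
        · intro h; exact absurd h (by omega)

section Main
variable {m : ℕ} (G : SimpleGraph (Fin m)) [DecidableRel G.Adj]

/-- the permutation list associated to a numbering -/
def prOf (σ : Fin m ≃ Fin m) : List (Fin m) :=
  (List.finRange m).map fun j => σ.symm j.rev

/-- longest prefix of `pr` inside the neighborhood of `v` -/
def KK (pr : List (Fin m)) (v : Fin m) : ℕ :=
  (pr.takeWhile fun u => decide (G.Adj v u)).length

lemma length_prOf (σ : Fin m ≃ Fin m) : (prOf σ).length = m := by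
  simp [prOf]

lemma nodup_prOf (σ : Fin m ≃ Fin m) : (prOf σ).Nodup :=
  (List.nodup_finRange m).map (fun a b h => Fin.rev_injective (σ.symm.injective h))

lemma toFinset_prOf (σ : Fin m ≃ Fin m) : (prOf σ).toFinset = Finset.univ := by
  ext x
  simp only [List.mem_toFinset, Finset.mem_univ, iff_true, prOf, List.mem_map]
  exact ⟨(σ x).rev, List.mem_finRange _, by simp⟩

lemma isPermOf_prOf (σ : Fin m ≃ Fin m) : (prOf σ).Nodup ∧ (prOf σ).toFinset = Finset.univ :=
  ⟨nodup_prOf σ, toFinset_prOf σ⟩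

lemma mem_take_prOf (σ : Fin m ≃ Fin m) (u : Fin m) (t : ℕ) :
    u ∈ (prOf σ).take t ↔ ((σ u).rev : ℕ) < t := by
  rw [prOf, ← List.map_take, List.mem_map]
  constructor
  · rintro ⟨j, hj, rfl⟩
    rw [List.mem_take_iff_getElem] at hj
    obtain ⟨i, hi, rfl⟩ := hj
    simp only [List.getElem_finRange]
    simp only [List.length_finRange, lt_min_iff] at hi
    simpa using hi.1
  · intro h
    refine ⟨(σ u).rev, ?_, by simp⟩
    rw [List.mem_take_iff_getElem]
    refine ⟨((σ u).rev : ℕ), ?_, ?_⟩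
    · simp only [List.length_finRange, lt_min_iff]
      exact ⟨h, (σ u).rev.is_lt⟩
    · rw [List.getElem_finRange]
      exact Fin.ext rfl

lemma KK_lt (pr : List (Fin m)) (v : Fin m) (hv : v ∈ pr) : KK G pr v < pr.length := by
  rcases Nat.lt_or_ge (KK G pr v) pr.length with h | h
  · exact h
  · exfalso
    have hle : (pr.takeWhile fun u => decide (G.Adj v u)).length ≤ pr.length :=
      (List.takeWhile_sublist _).length_le
    have heq : (pr.takeWhile fun u => decide (G.Adj v u)) = pr :=
      (List.takeWhile_prefix _).eq_of_length (le_antisymm hle h)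
    have := (List.takeWhile_eq_self_iff.mp heq) v hv
    simp at this

lemma modSumCut_eq (σ : Fin m ≃ Fin m) :
    modSumCut G σ = m + ∑ v : Fin m, KK G (prOf σ) v := by
  unfold modSumCut
  have step1 : ∀ i : Fin m,
      (Finset.univ.filter fun v => ∀ u, i < σ u → G.Adj v u)
        = (Finset.univ.filter fun v : Fin m => ((i.rev : ℕ) ≤ KK G (prOf σ) v)) := by
    intro i
    apply Finset.filter_congr
    intro v _
    have h1 : (∀ u, i < σ u → G.Adj v u) ↔
        (∀ u ∈ (prOf σ).take (i.rev : ℕ), decide (G.Adj v u) = true) := by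
      constructor
      · intro h u hu
        rw [mem_take_prOf] at hu
        have : i < σ u := by
          have := Fin.rev_lt_rev.mpr (show ((σ u).rev) < i.rev from hu)
          simpa using this
        simp [h u this]
      · intro h u hiu
        have : u ∈ (prOf σ).take (i.rev : ℕ) := by
          rw [mem_take_prOf]
          exact Fin.rev_lt_rev.mpr hiu
        simpa using h u this
    rw [h1, forall_take_iff]
    · exact Iff.rfl
    · rw [length_prOf]; exact le_of_lt i.rev.is_lt
  simp only [step1]
  rw [Fintype.sum_equiv Fin.revPerm
    (fun i : Fin m => (Finset.univ.filter fun v : Fin m => ((i.rev : ℕ) ≤ KK G (prOf σ) v)).card)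
    (fun i : Fin m => (Finset.univ.filter fun v : Fin m => ((i : ℕ) ≤ KK G (prOf σ) v)).card)
    (fun i => by simp)]
  simp only [Finset.card_filter]
  rw [Finset.sum_comm]
  have hcard : ∀ v : Fin m,
      (∑ i : Fin m, if (i : ℕ) ≤ KK G (prOf σ) v then 1 else 0) = KK G (prOf σ) v + 1 := by
    intro v
    have hvmem : v ∈ prOf σ := by
      rw [← List.mem_toFinset, toFinset_prOf]; exact Finset.mem_univ v
    have hklt : KK G (prOf σ) v < m := by
      have := KK_lt G (prOf σ) v hvmem
      rwa [length_prOf] at this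
    rw [← Finset.card_filter, card_filter_le hklt]
  rw [Finset.sum_congr rfl fun v _ => hcard v, Finset.sum_add_distrib]
  simp [add_comm]

lemma lcp_le_KK (pr : List (Fin m)) (v : Fin m) (pl : List (Fin m))
    (h : pl.toFinset = G.neighborFinset v) : lcp pr pl ≤ KK G pr v :=
  lcp_le_takeWhile pr pl fun b hb => by
    have : b ∈ G.neighborFinset v := h ▸ List.mem_toFinset.mpr hb
    rw [SimpleGraph.mem_neighborFinset] at this
    simpa using this

lemma exists_opt_pl (pr : List (Fin m)) (hnd : pr.Nodup) (v : Fin m) :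
    ∃ pl, IsPermOf pl (G.neighborFinset v) ∧ lcp pr pl = KK G pr v := by
  set P : Fin m → Bool := fun u => decide (G.Adj v u) with hP
  set tw := pr.takeWhile P with htw
  have htwnd : tw.Nodup := hnd.sublist (List.takeWhile_sublist P)
  have htwsub : ∀ x ∈ tw, x ∈ G.neighborFinset v := by
    intro x hx
    have := List.mem_takeWhile_imp hx
    rw [SimpleGraph.mem_neighborFinset]
    simpa [hP] using this
  refine ⟨tw ++ (G.neighborFinset v \ tw.toFinset).toList, ⟨?_, ?_⟩, ?_⟩
  · refine List.Nodup.append htwnd (Finset.nodup_toList _) ?_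
    intro x hx hx2
    have := Finset.mem_toList.mp hx2
    rw [Finset.mem_sdiff] at this
    exact this.2 (List.mem_toFinset.mpr hx)
  · ext x
    simp only [List.toFinset_append, Finset.mem_union, List.mem_toFinset, Finset.mem_toList,
      Finset.mem_sdiff]
    constructor
    · rintro (hx | hx)
      · exact htwsub x hx
      · exact hx.1
    · intro hx
      by_cases hxt : x ∈ tw
      · exact Or.inl hxt
      · exact Or.inr ⟨hx, fun hc => hxt hc⟩
  · refine le_antisymm ?_ ?_
    · apply lcp_le_takeWhile (P := P)
      intro b hb
      rw [List.mem_append] at hb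
      have hbn : b ∈ G.neighborFinset v := by
        rcases hb with hb | hb
        · exact htwsub b hb
        · exact (Finset.mem_sdiff.mp (Finset.mem_toList.mp hb)).1
      rw [SimpleGraph.mem_neighborFinset] at hbn
      simp [hP, hbn]
    · exact le_lcp_append tw pr _ (List.takeWhile_prefix P)

lemma exists_sigma (pr : List (Fin m)) (hnd : pr.Nodup) (hfin : pr.toFinset = Finset.univ) :
    ∃ σ : Fin m ≃ Fin m, prOf σ = pr := by
  have hlen : pr.length = m := by
    have h1 : pr.toFinset.card = pr.length := List.toFinset_card_of_nodup hnd
    rw [hfin] at h1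
    simpa using h1.symm
  set g : Fin m → Fin m := fun j => pr.get (Fin.cast hlen.symm j) with hg
  have hginj : Function.Injective g := by
    intro a b hab
    have := (List.nodup_iff_injective_get.mp hnd) hab
    have h2 := congrArg Fin.val this
    exact Fin.ext (by simpa using h2)
  set e : Fin m ≃ Fin m := Equiv.ofBijective g (Finite.injective_iff_bijective.mp hginj)
    with he
  refine ⟨(Fin.revPerm.trans e).symm, ?_⟩
  apply List.ext_getElem (by simp [length_prOf, hlen])
  intro i h1 h2
  rw [length_prOf] at h1
  simp only [prOf, List.getElem_map, List.getElem_finRange, Equiv.symm_symm,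
    Equiv.trans_apply, Fin.revPerm_apply, Fin.rev_rev]
  show g (Fin.cast (show (List.finRange m).length = m from List.length_finRange) ⟨i, by simpa using h1⟩) = pr[i]
  simp [hg, List.get_eq_getElem]

theorem stmt2' :
    (Finset.univ.sup fun σ : Fin m ≃ Fin m => modSumCut G σ)
      = m + sSup {b : ℕ | ∃ (pr : List (Fin m)) (pl : Fin m → List (Fin m)),
          IsPermOf pr Finset.univ ∧ (∀ i, IsPermOf (pl i) (G.neighborFinset i)) ∧
          starBenefit pr pl = b} := by
  set S := {b : ℕ | ∃ (pr : List (Fin m)) (pl : Fin m → List (Fin m)),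
      IsPermOf pr Finset.univ ∧ (∀ i, IsPermOf (pl i) (G.neighborFinset i)) ∧
      starBenefit pr pl = b} with hS
  have hachieve : ∀ σ : Fin m ≃ Fin m, ∃ b ∈ S, modSumCut G σ = m + b := by
    intro σ
    choose pl hpl hlcp using exists_opt_pl G (prOf σ) (nodup_prOf σ)
    refine ⟨∑ v : Fin m, KK G (prOf σ) v,
      ⟨prOf σ, pl, isPermOf_prOf σ, hpl, ?_⟩, modSumCut_eq G σ⟩
    unfold starBenefit
    exact Finset.sum_congr rfl fun v _ => hlcp v
  have hub : ∀ b ∈ S, m + b ≤ Finset.univ.sup fun σ : Fin m ≃ Fin m => modSumCut G σ := by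
    rintro b ⟨pr, pl, ⟨hnd, hfin⟩, hpl, rfl⟩
    obtain ⟨σ, hσ⟩ := exists_sigma pr hnd hfin
    calc m + starBenefit pr pl ≤ m + ∑ v : Fin m, KK G pr v := by
          refine Nat.add_le_add_left (Finset.sum_le_sum fun v _ => ?_) m
          exact lcp_le_KK G pr v (pl v) (hpl v).2
      _ = modSumCut G σ := by rw [modSumCut_eq, hσ]
      _ ≤ _ := Finset.le_sup (Finset.mem_univ σ)
  have hbdd : BddAbove S := by
    refine ⟨Finset.univ.sup fun σ : Fin m ≃ Fin m => modSumCut G σ, fun b hb => ?_⟩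
    exact le_trans (Nat.le_add_left b m) (hub b hb)
  obtain ⟨b1, hb1S, _⟩ := hachieve (Equiv.refl _)
  have hne : S.Nonempty := ⟨b1, hb1S⟩
  obtain ⟨σ0, _, hσ0⟩ := Finset.exists_mem_eq_sup Finset.univ Finset.univ_nonempty
    (fun σ : Fin m ≃ Fin m => modSumCut G σ)
  obtain ⟨b0, hb0S, hb0⟩ := hachieve σ0
  apply le_antisymm
  · rw [hσ0, hb0]
    exact Nat.add_le_add_left (le_csSup hbdd hb0S) m
  · exact hub _ (Nat.sSup_mem hne hbdd)


/-- The maximum Mod-Sum-Cut value over all numberings of `G` equals `m` plus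
the maximum benefit over all solutions of the star instance `S(G)`. -/
theorem stmt2 {m : ℕ} (G : SimpleGraph (Fin m)) [DecidableRel G.Adj] :
    (Finset.univ.sup fun σ : Fin m ≃ Fin m => modSumCut G σ)
      = m + sSup {b : ℕ | ∃ (pr : List (Fin m)) (pl : Fin m → List (Fin m)),
          IsPermOf pr Finset.univ ∧ (∀ i, IsPermOf (pl i) (G.neighborFinset i)) ∧
          starBenefit pr pl = b} := by
  exact stmt2' G
end Main
end

section
/- For every path instance of the Common Prefix Problem and all indices 1 ≤ i < j ≤ n, the optimal benefit satisfies the recurrence OPT(i, j) = max over i ≤ k < j of [ OPT(i, k) + OPT(k+1, j) + f(c(i, j)) ]. -/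
/-- Benefit of an assignment `p` of permutations to the vertices
`v_i, …, v_j` of a path, for the benefit function `f`:
`Σ_{x=i}^{j-1} f (|p_x ∧ p_{x+1}|)`. -/
def pathBenefit {α : Type*} [DecidableEq α] (f : ℕ → ℝ) (i j : ℕ)
    (p : ℕ → List α) : ℝ :=
  ∑ x ∈ Finset.Ico i j, f (lcp (p x) (p (x + 1)))

/-- `OPT s f i j`: the maximum, over all choices of permutations `p x` of
`s x` for `i ≤ x ≤ j`, of the benefit `Σ_{x=i}^{j-1} f (|p_x ∧ p_{x+1}|)`. -/
noncomputable def OPT {α : Type*} [DecidableEq α] (s : ℕ → Finset α)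
    (f : ℕ → ℝ) (i j : ℕ) : ℝ :=
  sSup {b : ℝ | ∃ p : ℕ → List α,
    (∀ x ∈ Finset.Icc i j, IsPermOf (p x) (s x)) ∧ pathBenefit f i j p = b}

/-- `commonCard s i j = c(i,j)`: the number of attributes common to all of
`s i, s (i+1), …, s j`. -/
def commonCard {α : Type*} [DecidableEq α] (s : ℕ → Finset α) (i j : ℕ) : ℕ :=
  ((s i).filter fun v => ∀ x ∈ Finset.Icc i j, v ∈ s x).card

namespace Stmt10Aux
variable {α : Type*} [DecidableEq α]

lemma lcp_le_length (p q : List α) : lcp p q ≤ p.length := by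
  induction p generalizing q with
  | nil => simp [lcp]
  | cons a p ih =>
    cases q with
    | nil => simp [lcp]
    | cons b q =>
      simp only [lcp, List.length_cons]
      split
      · exact Nat.succ_le_succ (ih q)
      · simp

lemma take_lcp (p q : List α) : p.take (lcp p q) = q.take (lcp p q) := by
  induction p generalizing q with
  | nil => simp [lcp]
  | cons a p ih =>
    cases q with
    | nil => simp [lcp]
    | cons b q =>
      simp only [lcp]
      split
      · next h => simp [h, ih q]
      · simp

lemma lcp_append (u p q : List α) : lcp (u ++ p) (u ++ q) = u.length + lcp p q := by
  induction u with
  | nil => simp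
  | cons a u ih => simp [lcp, ih]; omega

lemma take_eq_of_le_lcp {m : ℕ} {p q : List α} (h : m ≤ lcp p q) :
    p.take m = q.take m := by
  have h1 : p.take m = (p.take (lcp p q)).take m := by
    rw [List.take_take, Nat.min_eq_left h]
  rw [h1, take_lcp p q, List.take_take, Nat.min_eq_left h]

lemma lcp_filter_ge (t p q : List α) (hp : p.Nodup) :
    lcp p q ≤ lcp (t ++ p.filter (fun a => a ∉ t)) (t ++ q.filter (fun a => a ∉ t)) := by
  set ℓ := lcp p q with hℓ
  have hpl : ℓ ≤ p.length := lcp_le_length p q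
  have htake : p.take ℓ = q.take ℓ := take_lcp p q
  set P : α → Bool := fun a => decide (a ∉ t) with hP
  have hsp : p.filter P = (p.take ℓ).filter P ++ (p.drop ℓ).filter P := by
    rw [← List.filter_append, List.take_append_drop]
  have hsq : q.filter P = (q.take ℓ).filter P ++ (q.drop ℓ).filter P := by
    rw [← List.filter_append, List.take_append_drop]
  set w := (p.take ℓ).filter P with hw
  have key : lcp (t ++ p.filter P) (t ++ q.filter P) =
      (t ++ w).length + lcp ((p.drop ℓ).filter P) ((q.drop ℓ).filter P) := by
    rw [hsp, hsq, ← htake, ← List.append_assoc, ← List.append_assoc, lcp_append]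
  have hwlen : w.length + ((p.take ℓ).filter (fun a => a ∈ t)).length = ℓ := by
    have := (List.length_eq_length_filter_add (l := p.take ℓ) P).symm
    rw [List.length_take, Nat.min_eq_left hpl] at this
    have hfun : (fun x => !P x) = (fun a => decide (a ∈ t)) := by
      funext a; simp [hP]
    rw [hfun] at this
    exact this
  have hcle : ((p.take ℓ).filter (fun a => a ∈ t)).length ≤ t.length := by
    apply List.Subperm.length_le
    apply List.subperm_of_subset
    · exact (List.Nodup.sublist List.filter_sublist (hp.sublist (List.take_sublist _ _)))
    · intro a ha
      simp only [List.mem_filter, decide_eq_true_eq] at ha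
      exact ha.2
  rw [key]
  simp only [List.length_append]
  omega

lemma transform_perm {t z : List α} {s : Finset α} (ht : t.Nodup)
    (hts : t.toFinset ⊆ s) (hz : IsPermOf z s) :
    IsPermOf (t ++ z.filter (fun a => a ∉ t)) s := by
  obtain ⟨hnd, hfin⟩ := hz
  constructor
  · rw [List.nodup_append]
    refine ⟨ht, hnd.filter _, ?_⟩
    intro a ha b hb
    simp only [List.mem_filter, decide_eq_true_eq] at hb
    exact fun hab => by subst hab; exact hb.2 ha
  · ext a
    simp only [List.toFinset_append, Finset.mem_union, List.mem_toFinset,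
      List.mem_filter, decide_eq_true_eq]
    constructor
    · rintro (h | ⟨h, -⟩)
      · exact hts (List.mem_toFinset.mpr h)
      · rw [← hfin]; exact List.mem_toFinset.mpr h
    · intro h
      by_cases hat : a ∈ t
      · exact Or.inl hat
      · exact Or.inr ⟨List.mem_toFinset.mp (hfin ▸ h), hat⟩

def benefSet (s : ℕ → Finset α) (f : ℕ → ℝ) (i j : ℕ) : Set ℝ :=
  {b : ℝ | ∃ p : ℕ → List α,
    (∀ x ∈ Finset.Icc i j, IsPermOf (p x) (s x)) ∧ pathBenefit f i j p = b}

lemma OPT_eq (s : ℕ → Finset α) (f : ℕ → ℝ) (i j : ℕ) :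
    OPT s f i j = sSup (benefSet s f i j) := rfl

lemma benefSet_nonempty (s : ℕ → Finset α) (f : ℕ → ℝ) (i j : ℕ) :
    (benefSet s f i j).Nonempty := by
  refine ⟨pathBenefit f i j (fun x => (s x).toList), fun x => (s x).toList, ?_, rfl⟩
  intro x _
  exact ⟨Finset.nodup_toList _, Finset.toList_toFinset _⟩

lemma benefSet_bddAbove (s : ℕ → Finset α) {f : ℕ → ℝ} (hf : Monotone f) (i j : ℕ) :
    BddAbove (benefSet s f i j) := by
  refine ⟨∑ x ∈ Finset.Ico i j, f ((s x).card), ?_⟩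
  rintro b ⟨p, hp, rfl⟩
  apply Finset.sum_le_sum
  intro x hx
  have hx' : x ∈ Finset.Icc i j := by
    rw [Finset.mem_Ico] at hx; rw [Finset.mem_Icc]; omega
  obtain ⟨hnd, hfin⟩ := hp x hx'
  apply hf
  calc lcp (p x) (p (x+1)) ≤ (p x).length := lcp_le_length _ _
    _ = (s x).card := by rw [← hfin, List.toFinset_card_of_nodup hnd]

lemma pathBenefit_le_OPT {s : ℕ → Finset α} {f : ℕ → ℝ} (hf : Monotone f)
    {i j : ℕ} {p : ℕ → List α} (hp : ∀ x ∈ Finset.Icc i j, IsPermOf (p x) (s x)) :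
    pathBenefit f i j p ≤ OPT s f i j :=
  le_csSup (benefSet_bddAbove s hf i j) ⟨p, hp, rfl⟩

lemma min_lcp_le_commonCard {s : ℕ → Finset α} {i j m : ℕ} {p : ℕ → List α}
    (hp : ∀ x ∈ Finset.Icc i j, IsPermOf (p x) (s x)) (hij : i < j)
    (hm : ∀ x ∈ Finset.Ico i j, m ≤ lcp (p x) (p (x+1))) :
    m ≤ commonCard s i j := by
  have hi0 : i ∈ Finset.Ico i j := Finset.mem_Ico.mpr ⟨le_refl i, hij⟩
  have hml : m ≤ (p i).length := le_trans (hm i hi0) (lcp_le_length _ _)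
  have key : ∀ d, i + d ≤ j → (p (i+d)).take m = (p i).take m := by
    intro d
    induction d with
    | zero => intro _; rfl
    | succ d ih =>
      intro hd
      have h1 : i + d < j := by omega
      have h2 : i + d ∈ Finset.Ico i j := Finset.mem_Ico.mpr ⟨by omega, h1⟩
      have heq := take_eq_of_le_lcp (hm _ h2)
      rw [show i + (d+1) = (i+d)+1 by ring, ← heq]
      exact ih (by omega)
  set w := (p i).take m with hw
  have hii : i ∈ Finset.Icc i j := Finset.mem_Icc.mpr ⟨le_refl i, le_of_lt hij⟩
  have hwnd : w.Nodup := (List.take_sublist m (p i)).nodup (hp i hii).1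
  have hwlen : w.length = m := by rw [hw, List.length_take, Nat.min_eq_left hml]
  have hsub : w.toFinset ⊆ (s i).filter (fun v => ∀ x ∈ Finset.Icc i j, v ∈ s x) := by
    intro v hv
    rw [List.mem_toFinset] at hv
    have hmem : ∀ x ∈ Finset.Icc i j, v ∈ s x := by
      intro x hx
      have hx' := Finset.mem_Icc.mp hx
      have hdx : x = i + (x - i) := by omega
      have htk : (p x).take m = w := by rw [hdx]; exact key _ (by omega)
      have hvx : v ∈ p x := List.mem_of_mem_take (by rw [htk]; exact hv)
      rw [← (hp x hx).2]
      exact List.mem_toFinset.mpr hvx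
    exact Finset.mem_filter.mpr ⟨hmem i hii, hmem⟩
  calc m = w.toFinset.card := by rw [List.toFinset_card_of_nodup hwnd, hwlen]
    _ ≤ _ := Finset.card_le_card hsub

lemma combine {s : ℕ → Finset α} {f : ℕ → ℝ} (hf : Monotone f)
    {i k j : ℕ} (hik : i ≤ k) (hkj : k < j)
    {p q : ℕ → List α}
    (hp : ∀ x ∈ Finset.Icc i k, IsPermOf (p x) (s x))
    (hq : ∀ x ∈ Finset.Icc (k+1) j, IsPermOf (q x) (s x)) :
    pathBenefit f i k p + pathBenefit f (k+1) j q + f (commonCard s i j)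
      ≤ OPT s f i j := by
  set C := (s i).filter (fun v => ∀ x ∈ Finset.Icc i j, v ∈ s x) with hC
  set t := C.toList with htdef
  have htnd : t.Nodup := Finset.nodup_toList C
  have htfin : t.toFinset = C := Finset.toList_toFinset C
  have htlen : t.length = commonCard s i j := Finset.length_toList C
  have htsub : ∀ x ∈ Finset.Icc i j, t.toFinset ⊆ s x := by
    intro x hx v hv
    rw [htfin, hC, Finset.mem_filter] at hv
    exact hv.2 x hx
  set T : List α → List α := fun z => t ++ z.filter (fun a => a ∉ t) with hT
  set r : ℕ → List α := fun x => if x ≤ k then T (p x) else T (q x) with hr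
  have hrp : ∀ x, x ≤ k → r x = T (p x) := by
    intro x hx; simp only [hr, if_pos hx]
  have hrq : ∀ x, ¬ (x ≤ k) → r x = T (q x) := by
    intro x hx; simp only [hr, if_neg hx]
  have hrvalid : ∀ x ∈ Finset.Icc i j, IsPermOf (r x) (s x) := by
    intro x hx
    have hx' := Finset.mem_Icc.mp hx
    by_cases hxk : x ≤ k
    · rw [hrp x hxk]
      exact transform_perm htnd (htsub x hx) (hp x (Finset.mem_Icc.mpr ⟨hx'.1, hxk⟩))
    · rw [hrq x hxk]
      exact transform_perm htnd (htsub x hx) (hq x (Finset.mem_Icc.mpr ⟨by omega, hx'.2⟩))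
  have hsplit : pathBenefit f i j r =
      (∑ x ∈ Finset.Ico i k, f (lcp (r x) (r (x+1)))) +
        (f (lcp (r k) (r (k+1))) + ∑ x ∈ Finset.Ico (k+1) j, f (lcp (r x) (r (x+1)))) := by
    rw [pathBenefit, ← Finset.sum_Ico_consecutive _ hik (le_of_lt hkj),
      Finset.sum_eq_sum_Ico_succ_bot hkj]
  have hleft : pathBenefit f i k p ≤ ∑ x ∈ Finset.Ico i k, f (lcp (r x) (r (x+1))) := by
    apply Finset.sum_le_sum
    intro x hx
    have hx' := Finset.mem_Ico.mp hx
    rw [hrp x (by omega), hrp (x+1) (by omega)]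
    apply hf
    exact lcp_filter_ge t _ _ (hp x (Finset.mem_Icc.mpr ⟨hx'.1, by omega⟩)).1
  have hright : pathBenefit f (k+1) j q ≤ ∑ x ∈ Finset.Ico (k+1) j, f (lcp (r x) (r (x+1))) := by
    apply Finset.sum_le_sum
    intro x hx
    have hx' := Finset.mem_Ico.mp hx
    rw [hrq x (by omega), hrq (x+1) (by omega)]
    apply hf
    exact lcp_filter_ge t _ _ (hq x (Finset.mem_Icc.mpr ⟨hx'.1, by omega⟩)).1
  have hmid : f (commonCard s i j) ≤ f (lcp (r k) (r (k+1))) := by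
    apply hf
    rw [hrp k (le_refl k), hrq (k+1) (by omega), hT]
    simp only []
    rw [lcp_append, ← htlen]
    exact Nat.le_add_right _ _
  have hfinal : pathBenefit f i j r ≤ OPT s f i j :=
    pathBenefit_le_OPT hf hrvalid
  rw [hsplit] at hfinal
  linarith

end Stmt10Aux

open Stmt10Aux in
/-- For every path instance of the Common Prefix Problem and all indices
`1 ≤ i < j ≤ n`, the optimal benefit satisfies
`OPT(i,j) = max_{i ≤ k < j} [OPT(i,k) + OPT(k+1,j) + f(c(i,j))]`. -/
theorem stmt10 {α : Type*} [DecidableEq α] (n : ℕ) (s : ℕ → Finset α)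
    (f : ℕ → ℝ) (hf : Monotone f) (hf0 : f 0 = 0)
    (i j : ℕ) (hi : 1 ≤ i) (hij : i < j) (hjn : j ≤ n) :
    OPT s f i j = (Finset.Ico i j).sup' (Finset.nonempty_Ico.mpr hij)
      (fun k => OPT s f i k + OPT s f (k + 1) j + f (commonCard s i j)) := by
  apply le_antisymm
  · rw [OPT_eq]
    apply csSup_le (benefSet_nonempty s f i j)
    rintro b ⟨p, hp, rfl⟩
    obtain ⟨k, hk, hkmin⟩ := Finset.exists_min_image (Finset.Ico i j)
      (fun x => lcp (p x) (p (x+1))) (Finset.nonempty_Ico.mpr hij)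
    have hk' := Finset.mem_Ico.mp hk
    refine le_trans ?_ (Finset.le_sup' _ hk)
    have hm : lcp (p k) (p (k+1)) ≤ commonCard s i j :=
      min_lcp_le_commonCard hp hij hkmin
    have hsplit : pathBenefit f i j p =
        pathBenefit f i k p + (f (lcp (p k) (p (k+1))) + pathBenefit f (k+1) j p) := by
      rw [pathBenefit, pathBenefit, pathBenefit,
        ← Finset.sum_Ico_consecutive _ hk'.1 (le_of_lt hk'.2),
        Finset.sum_eq_sum_Ico_succ_bot hk'.2]
    have h1 : pathBenefit f i k p ≤ OPT s f i k := by
      apply pathBenefit_le_OPT hf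
      intro x hx
      have hx' := Finset.mem_Icc.mp hx
      exact hp x (Finset.mem_Icc.mpr ⟨hx'.1, by omega⟩)
    have h2 : pathBenefit f (k+1) j p ≤ OPT s f (k+1) j := by
      apply pathBenefit_le_OPT hf
      intro x hx
      have hx' := Finset.mem_Icc.mp hx
      exact hp x (Finset.mem_Icc.mpr ⟨by omega, hx'.2⟩)
    have h3 : f (lcp (p k) (p (k+1))) ≤ f (commonCard s i j) := hf hm
    rw [hsplit]
    linarith
  · apply Finset.sup'_le
    intro k hk
    have hk' := Finset.mem_Ico.mp hk
    apply le_of_forall_pos_le_add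
    intro ε hε
    obtain ⟨b1, ⟨p, hp, hb1⟩, hgt1⟩ := exists_lt_of_lt_csSup (benefSet_nonempty s f i k)
      (show OPT s f i k - ε/2 < sSup (benefSet s f i k) by rw [← OPT_eq]; linarith)
    obtain ⟨b2, ⟨q, hq, hb2⟩, hgt2⟩ := exists_lt_of_lt_csSup (benefSet_nonempty s f (k+1) j)
      (show OPT s f (k+1) j - ε/2 < sSup (benefSet s f (k+1) j) by rw [← OPT_eq]; linarith)
    have hcomb := combine hf hk'.1 hk'.2 hp hq
    rw [← hb1] at hgt1
    rw [← hb2] at hgt2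
    linarith
end

section
/- Let a path instance of the Common Prefix Problem be given, let c = s_1 ∩ s_2 ∩ … ∩ s_n, and let o_c be an arbitrary fixed permutation of c. For every solution (p_1, …, p_n) there exists a solution (p'_1, …, p'_n) in which every p'_x has o_c as a prefix and whose benefit is at least that of (p_1, …, p_n); in particular, there exists an optimal solution in which every permutation begins with o_c. -/
lemma lcp_le_length {α : Type*} [DecidableEq α] : ∀ a b : List α, lcp a b ≤ a.length
  | [], _ => by simp [lcp]
  | _ :: _, [] => by simp [lcp]
  | a :: p, b :: q => by
    simp only [lcp, List.length_cons]
    split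
    · exact Nat.succ_le_succ (lcp_le_length p q)
    · exact Nat.zero_le _

lemma take_lcp_prefix_right {α : Type*} [DecidableEq α] :
    ∀ a b : List α, a.take (lcp a b) <+: b
  | [], b => by simp [lcp]
  | _ :: _, [] => by simp [lcp]
  | a :: p, b :: q => by
    by_cases h : a = b
    · subst h
      have h1 : lcp (a :: p) (a :: q) = lcp p q + 1 := by simp [lcp]
      rw [h1, List.take_succ_cons]
      obtain ⟨t, ht⟩ := take_lcp_prefix_right p q
      exact ⟨t, by rw [List.cons_append, ht]⟩
    · simp [lcp, h]

lemma le_lcp {α : Type*} [DecidableEq α] (r : List α) :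
    ∀ a b : List α, r <+: a → r <+: b → r.length ≤ lcp a b := by
  induction r with
  | nil => intro a b _ _; simp
  | cons x r ih =>
    intro a b ha hb
    obtain ⟨ta, rfl⟩ := ha
    obtain ⟨tb, rfl⟩ := hb
    simp only [List.cons_append, lcp, if_pos rfl, List.length_cons]
    exact Nat.succ_le_succ (ih _ _ (List.prefix_append r ta) (List.prefix_append r tb))

lemma lcp_append {α : Type*} [DecidableEq α] (c : List α) :
    ∀ a b : List α, lcp (c ++ a) (c ++ b) = c.length + lcp a b := by
  induction c with
  | nil => intro a b; simp
  | cons x c ih =>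
    intro a b
    simp only [List.cons_append, lcp, eq_self_iff_true, if_true, List.append_eq, ih, List.length_cons]
    omega

lemma lcp_key {α : Type*} [DecidableEq α] (oc a b : List α) (ha : a.Nodup) :
    lcp a b ≤ lcp (oc ++ a.filter (fun v => decide (v ∉ oc)))
      (oc ++ b.filter (fun v => decide (v ∉ oc))) := by
  set P : α → Bool := fun v => decide (v ∉ oc) with hP
  rw [lcp_append]
  set r := a.take (lcp a b) with hr
  have hra : r <+: a := List.take_prefix _ _
  have hrb : r <+: b := take_lcp_prefix_right a b
  have hlen : r.length = lcp a b := by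
    rw [hr, List.length_take]
    exact Nat.min_eq_left (lcp_le_length a b)
  have h3 : (r.filter P).length ≤ lcp (a.filter P) (b.filter P) :=
    le_lcp _ _ _ (hra.filter P) (hrb.filter P)
  have hsplit : (r.filter P).length + (r.filter (fun x => !P x)).length = r.length := by
    rw [← List.length_append]
    exact (List.filter_append_perm P r).length_eq
  have hnotP : (r.filter (fun x => !P x)).length ≤ oc.length := by
    apply List.Subperm.length_le
    apply List.subperm_of_subset ((ha.sublist hra.sublist).filter _)
    intro v hv
    have := List.of_mem_filter hv
    simpa [hP] using this
  omega

lemma perm_toList_of_isPermOf {α : Type*} [DecidableEq α] {l : List α} {s : Finset α}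
    (h : IsPermOf l s) : l.Perm s.toList := by
  apply List.perm_of_nodup_nodup_toFinset_eq h.1 (Finset.nodup_toList s)
  rw [h.2, Finset.toList_toFinset]

/-- Let a path instance on `v_1, …, v_n` be given, let `c = s_1 ∩ … ∩ s_n`,
and let `oc` be an arbitrary fixed permutation of `c`. For every solution
there is a solution in which every permutation has `oc` as a prefix and whose
benefit is at least as large; in particular, there exists an optimal solution
in which every permutation begins with `oc`. -/
theorem stmt12 {α : Type*} [DecidableEq α] (n : ℕ) (hn : 1 ≤ n)
    (s : ℕ → Finset α) (f : ℕ → ℝ) (hf : Monotone f) (hf0 : f 0 = 0)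
    (oc : List α)
    (hoc : IsPermOf oc ((s 1).filter fun v => ∀ x ∈ Finset.Icc (1 : ℕ) n, v ∈ s x)) :
    (∀ p : ℕ → List α, (∀ x ∈ Finset.Icc (1 : ℕ) n, IsPermOf (p x) (s x)) →
      ∃ p' : ℕ → List α, (∀ x ∈ Finset.Icc (1 : ℕ) n, IsPermOf (p' x) (s x)) ∧
        (∀ x ∈ Finset.Icc (1 : ℕ) n, oc <+: p' x) ∧
        pathBenefit f 1 n p ≤ pathBenefit f 1 n p') ∧
    (∃ p' : ℕ → List α, (∀ x ∈ Finset.Icc (1 : ℕ) n, IsPermOf (p' x) (s x)) ∧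
      (∀ x ∈ Finset.Icc (1 : ℕ) n, oc <+: p' x) ∧
      ∀ p : ℕ → List α, (∀ x ∈ Finset.Icc (1 : ℕ) n, IsPermOf (p x) (s x)) →
        pathBenefit f 1 n p ≤ pathBenefit f 1 n p') := by
  classical
  set P : α → Bool := fun v => decide (v ∉ oc) with hP
  have hc : ∀ v ∈ oc, ∀ x ∈ Finset.Icc (1 : ℕ) n, v ∈ s x := by
    intro v hv x hx
    have hm : v ∈ (s 1).filter fun v => ∀ x ∈ Finset.Icc (1 : ℕ) n, v ∈ s x := by
      rw [← hoc.2]; exact List.mem_toFinset.mpr hv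
    exact (Finset.mem_filter.mp hm).2 x hx
  have key : ∀ p : ℕ → List α, (∀ x ∈ Finset.Icc (1 : ℕ) n, IsPermOf (p x) (s x)) →
      ∃ p' : ℕ → List α, (∀ x ∈ Finset.Icc (1 : ℕ) n, IsPermOf (p' x) (s x)) ∧
        (∀ x ∈ Finset.Icc (1 : ℕ) n, oc <+: p' x) ∧
        pathBenefit f 1 n p ≤ pathBenefit f 1 n p' := by
    intro p hp
    refine ⟨fun x => oc ++ (p x).filter P, ?_, ?_, ?_⟩
    · intro x hx
      obtain ⟨hnd, hts⟩ := hp x hx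
      constructor
      · rw [List.nodup_append]
        refine ⟨hoc.1, hnd.filter _, ?_⟩
        intro v hv w hv'
        have := List.of_mem_filter hv'
        simp [hP] at this
        rintro rfl
        exact this hv
      · ext v
        simp only [List.toFinset_append, Finset.mem_union, List.mem_toFinset,
          List.mem_filter]
        constructor
        · rintro (h | ⟨h, _⟩)
          · exact hc v h x hx
          · rw [← hts]; exact List.mem_toFinset.mpr h
        · intro hv
          by_cases hvo : v ∈ oc
          · exact Or.inl hvo
          · refine Or.inr ⟨?_, by simp [hP, hvo]⟩
            rw [← List.mem_toFinset, hts]; exact hv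
    · intro x hx; exact ⟨_, rfl⟩
    · unfold pathBenefit
      apply Finset.sum_le_sum
      intro x hx
      rw [Finset.mem_Ico] at hx
      apply hf
      exact lcp_key oc _ _ (hp x (by rw [Finset.mem_Icc]; omega)).1
  refine ⟨key, ?_⟩
  set S : Set (ℕ → List α) := {q | (∀ x ∈ Finset.Icc (1 : ℕ) n, IsPermOf (q x) (s x)) ∧
    ∀ x, x ∉ Finset.Icc (1 : ℕ) n → q x = []} with hS
  have hSfin : S.Finite := by
    have hfin : ∀ x : {y // y ∈ Finset.Icc (1 : ℕ) n},
        {l : List α | l.Perm (s x.1).toList}.Finite := fun x =>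
      ((s x.1).toList.permutations.finite_toSet).subset
        (fun l hl => List.mem_permutations.mpr hl)
    refine Set.Finite.of_finite_image (f := fun q (x : {y // y ∈ Finset.Icc (1 : ℕ) n}) => q x.1)
      ((Set.Finite.pi hfin).subset ?_) ?_
    · rintro _ ⟨q, hq, rfl⟩ x _
      exact perm_toList_of_isPermOf (hq.1 x.1 x.2)
    · intro q hq q' hq' h
      funext x
      by_cases hx : x ∈ Finset.Icc (1 : ℕ) n
      · exact congrFun h ⟨x, hx⟩
      · rw [hq.2 x hx, hq'.2 x hx]
  have hSne : S.Nonempty := by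
    refine ⟨fun x => if x ∈ Finset.Icc (1 : ℕ) n then (s x).toList else [], ?_, ?_⟩
    · intro x hx
      simp only [if_pos hx]
      exact ⟨Finset.nodup_toList _, Finset.toList_toFinset _⟩
    · intro x hx; simp only [if_neg hx]
  obtain ⟨q, hqS, hqmax⟩ := hSfin.exists_maximalFor (pathBenefit f 1 n) S hSne
  obtain ⟨q', hq'1, hq'2, hq'3⟩ := key q hqS.1
  refine ⟨q', hq'1, hq'2, ?_⟩
  intro p hp
  set p0 : ℕ → List α := fun x => if x ∈ Finset.Icc (1 : ℕ) n then p x else [] with hp0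
  have hp0S : p0 ∈ S := by
    constructor
    · intro x hx; simp only [hp0, if_pos hx]; exact hp x hx
    · intro x hx; simp only [hp0, if_neg hx]
  have hbeq : pathBenefit f 1 n p = pathBenefit f 1 n p0 := by
    unfold pathBenefit
    apply Finset.sum_congr rfl
    intro x hx
    rw [Finset.mem_Ico] at hx
    have h1 : x ∈ Finset.Icc (1 : ℕ) n := by rw [Finset.mem_Icc]; omega
    have h2 : x + 1 ∈ Finset.Icc (1 : ℕ) n := by rw [Finset.mem_Icc]; omega
    simp only [hp0, if_pos h1, if_pos h2]
  have hm : pathBenefit f 1 n p0 ≤ pathBenefit f 1 n q := by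
    rcases le_total (pathBenefit f 1 n p0) (pathBenefit f 1 n q) with h | h
    · exact h
    · exact hqmax hp0S h
  calc pathBenefit f 1 n p = pathBenefit f 1 n p0 := hbeq
    _ ≤ pathBenefit f 1 n q := hm
    _ ≤ pathBenefit f 1 n q' := hq'3
end

section
/- Let p and q be duplicate-free lists and let c be a finite set with c contained in the set of elements of p and in the set of elements of q. Let p' and q' be obtained from p and q by deleting all elements of c (preserving the order of the remaining elements). Then |p ∧ q| ≤ |c| + |p' ∧ q'|. -/
/-- Let `p`, `q` be duplicate-free lists and `c` a finite set contained in
the sets of elements of both `p` and `q`. If `p'`, `q'` are obtained from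
`p`, `q` by deleting all elements of `c` (preserving the order of the
remaining elements), then `|p ∧ q| ≤ |c| + |p' ∧ q'|`. -/
theorem stmt14 {α : Type*} [DecidableEq α] (p q : List α)
    (hp : p.Nodup) (hq : q.Nodup) (c : Finset α)
    (hcp : c ⊆ p.toFinset) (hcq : c ⊆ q.toFinset) :
    lcp p q ≤ c.card + lcp (p.filter fun x => x ∉ c) (q.filter fun x => x ∉ c) := by
  induction p generalizing q c with
  | nil => simp [lcp]
  | cons a p ih =>
    cases q with
    | nil => simp [lcp]
    | cons b q =>
      by_cases hab : a = b
      · subst hab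
        simp only [List.nodup_cons] at hp hq
        by_cases hac : a ∈ c
        · have hca : c.erase a ⊆ p.toFinset := by
            intro x hx
            have hxc := hcp (Finset.mem_of_mem_erase hx)
            simp only [List.toFinset_cons, Finset.mem_insert, List.mem_toFinset] at hxc ⊢
            rcases hxc with h | h
            · exact absurd h (Finset.ne_of_mem_erase hx)
            · exact h
          have hcb : c.erase a ⊆ q.toFinset := by
            intro x hx
            have hxc := hcq (Finset.mem_of_mem_erase hx)
            simp only [List.toFinset_cons, Finset.mem_insert, List.mem_toFinset] at hxc ⊢
            rcases hxc with h | h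
            · exact absurd h (Finset.ne_of_mem_erase hx)
            · exact h
          have hfp : (p.filter fun x => x ∉ c) = p.filter fun x => x ∉ c.erase a := by
            apply List.filter_congr
            intro x hx
            have hxa : x ≠ a := fun h => hp.1 (h ▸ hx)
            simp [Finset.mem_erase, hxa]
          have hfq : (q.filter fun x => x ∉ c) = q.filter fun x => x ∉ c.erase a := by
            apply List.filter_congr
            intro x hx
            have hxa : x ≠ a := fun h => hq.1 (h ▸ hx)
            simp [Finset.mem_erase, hxa]
          have hcard : c.card = (c.erase a).card + 1 :=
            (Finset.card_erase_add_one hac).symm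
          have := ih q hp.2 hq.2 (c.erase a) hca hcb
          simp only [lcp, if_pos rfl, List.filter_cons, hac, hfp, hfq]
          simp only [hac, not_true_eq_false, decide_false, Bool.false_eq_true,
            if_false, if_true]
          omega
        · have hca : c ⊆ p.toFinset := by
            intro x hx
            have hxc := hcp hx
            simp only [List.toFinset_cons, Finset.mem_insert, List.mem_toFinset] at hxc ⊢
            rcases hxc with h | h
            · exact absurd (h ▸ hx) hac
            · exact h
          have hcb : c ⊆ q.toFinset := by
            intro x hx
            have hxc := hcq hx
            simp only [List.toFinset_cons, Finset.mem_insert, List.mem_toFinset] at hxc ⊢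
            rcases hxc with h | h
            · exact absurd (h ▸ hx) hac
            · exact h
          have := ih q hp.2 hq.2 c hca hcb
          simp only [lcp, if_pos rfl, List.filter_cons, hac, not_false_eq_true,
            decide_true, if_true]
          omega
      · simp [lcp, hab]
end
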